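/- arXiv:1807.01832 — 4 statements merged into one kernel-verified Lean document; each statement's English description precedes it below -/
import Mathlib

section
/- Let 0 < β < 1/2, f(u) = u(u-β)(1-u), F(u) = -∫₀ᵘ f = u⁴/4 - (1+β)u³/3 + βu²/2, and for γ > 0 set L_γ(μ) = μ²/(2γ) + F(μ). If γ > γ* = 9/((1-2β)(2-β)) and 0, μ₂, μ₃ are the three solutions of f(u) = u/γ with 0 < μ₂ < μ₃, then L_γ(μ₂) > L_γ(0) > L_γ(μ₃). -/
/-!
Dividing `f(μ) = μ/γ` by `μ ≠ 0` shows that `μ₂, μ₃` are the roots of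
`(u - β)(1 - u) = 1/γ`, so `μ₂ + μ₃ = 1 + β`. Substituting `1/γ = (μ - β)(1 - μ)` into the energy
of such a root collapses it to `L_γ(μ) = μ³(2(1 + β) - 3μ)/12`, whose sign is that of
`2(1 + β)/3 - μ`. The threshold `γ*` is exactly the condition that `2(1 + β)/3` lies strictly
between the two roots, since the monic quadratic with roots `μ₂, μ₃` takes the value `1/γ - (1 - 2β)(2 - β)/9` there.
-/

namespace FitzHughNagumo

lemma sub_mul_one_sub_eq_inv_of_eq_div {β γ μ : ℝ} (hμ : μ ≠ 0)
    (h : μ * (μ - β) * (1 - μ) = μ / γ) : (μ - β) * (1 - μ) = γ⁻¹ :=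
  mul_left_cancel₀ hμ (by rw [← mul_assoc, h, div_eq_mul_inv])

lemma add_eq_of_sub_mul_one_sub_eq {β k x y : ℝ} (hxy : x ≠ y)
    (hx : (x - β) * (1 - x) = k) (hy : (y - β) * (1 - y) = k) : x + y = 1 + β := by
  have h : (x - y) * (1 + β - (x + y)) = 0 := by linear_combination hx - hy
  linarith [(mul_eq_zero.mp h).resolve_left (sub_ne_zero.mpr hxy)]

lemma sub_mul_sub_eq_of_sub_mul_one_sub_eq {β k x y : ℝ} (hsum : x + y = 1 + β)
    (hx : (x - β) * (1 - x) = k) :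
    (2 * (1 + β) / 3 - x) * (2 * (1 + β) / 3 - y) = k - (1 - 2 * β) * (2 - β) / 9 := by
  have hy : y = 1 + β - x := by linarith
  subst hy
  linear_combination hx

lemma lt_and_lt_of_sub_mul_sub_neg {c x y : ℝ} (hxy : x < y) (h : (c - x) * (c - y) < 0) :
    x < c ∧ c < y := by
  rcases mul_neg_iff.mp h with ⟨hx, hy⟩ | ⟨hx, hy⟩
  · exact ⟨by linarith, by linarith⟩
  · linarith

lemma energy_eq_of_sub_mul_one_sub_eq_inv {β γ μ : ℝ} (h : (μ - β) * (1 - μ) = γ⁻¹) :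
    μ ^ 2 / (2 * γ) + (μ ^ 4 / 4 - (1 + β) * μ ^ 3 / 3 + β * μ ^ 2 / 2)
      = μ ^ 3 * (2 * (1 + β) - 3 * μ) / 12 := by
  linear_combination (-μ ^ 2 / 2) * h

end FitzHughNagumo

open FitzHughNagumo in
theorem stmt_2 (β γ μ₂ μ₃ : ℝ) (f F L : ℝ → ℝ)
    (hβ : 0 < β ∧ β < 1/2)
    (hf : ∀ u, f u = u * (u - β) * (1 - u))
    (hF : ∀ u, F u = u^4 / 4 - (1 + β) * u^3 / 3 + β * u^2 / 2)
    (hL : ∀ μ, L μ = μ^2 / (2 * γ) + F μ)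
    (hγ : γ > 9 / ((1 - 2*β) * (2 - β)))
    (hroots : {u : ℝ | f u = u / γ} = {0, μ₂, μ₃})
    (hord : 0 < μ₂ ∧ μ₂ < μ₃) :
    L μ₂ > L 0 ∧ L 0 > L μ₃ := by
  obtain ⟨hμ₂, hμ₂₃⟩ := hord
  have hD : 0 < (1 - 2 * β) * (2 - β) := mul_pos (by linarith) (by linarith)
  have hγ₀ : 0 < γ := (div_pos (by norm_num) hD).trans hγ
  have hroot : ∀ μ ∈ ({0, μ₂, μ₃} : Set ℝ), μ ≠ 0 → (μ - β) * (1 - μ) = γ⁻¹ := by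
    intro μ hμ hμ₀
    have hfμ : f μ = μ / γ := by rw [← hroots] at hμ; exact hμ
    exact sub_mul_one_sub_eq_inv_of_eq_div hμ₀ (by rwa [hf] at hfμ)
  have h₂ := hroot μ₂ (by simp) hμ₂.ne'
  have h₃ := hroot μ₃ (by simp) (hμ₂.trans hμ₂₃).ne'
  have hsep : (2 * (1 + β) / 3 - μ₂) * (2 * (1 + β) / 3 - μ₃) < 0 := by
    have hγ' : γ⁻¹ < (1 - 2 * β) * (2 - β) / 9 :=
      (inv_lt_comm₀ hγ₀ (by positivity)).mpr (by rwa [inv_div])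
    rw [sub_mul_sub_eq_of_sub_mul_one_sub_eq (add_eq_of_sub_mul_one_sub_eq hμ₂₃.ne h₂ h₃) h₂]
    linarith
  obtain ⟨hc₂, hc₃⟩ := lt_and_lt_of_sub_mul_sub_neg hμ₂₃ hsep
  have hL₀ : L 0 = 0 := by simp [hL, hF]
  rw [hL₀, hL, hL, hF, hF, energy_eq_of_sub_mul_one_sub_eq_inv h₂,
    energy_eq_of_sub_mul_one_sub_eq_inv h₃]
  constructor
  · have : 0 < 2 * (1 + β) - 3 * μ₂ := by linarith
    positivity
  · have : 2 * (1 + β) - 3 * μ₃ < 0 := by linarith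
    linarith [mul_neg_of_pos_of_neg (pow_pos (hμ₂.trans hμ₂₃) 3) this]
end

section
/- Let 0 < β < 1/2, f(u) = u(u-β)(1-u), γ* = 9/((1-2β)(2-β)), and let γ̃₁ be determined by f(ρ̂) = ρ̂/γ̃₁ where ρ̂ = (1+β+√(β²-β+1))/3. If γ̃₁ < γ < γ* then L_γ(μ₂) > L_γ(μ₃) > L_γ(0), where L_γ(μ) = μ²/(2γ) + F(μ) and 0 < μ₂ < μ₃ are the positive solutions of f(u) = u/γ. -/
/-!
Put `c = 1/γ`. The positive roots `μ₂ < μ₃` of `f u = c u` are the roots of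
`(u - β)(1 - u) = c`, so `μ₂ + μ₃ = 1 + β` and `μ₂ μ₃ = β + c`. Substituting these into
`L_γ` turns it into `∫₀^μ u (u - μ₂)(u - μ₃) du = μ⁴/4 - (μ₂ + μ₃) μ³/3 + μ₂ μ₃ μ²/2`, whose
values at the roots are `L(μ₂) - L(μ₃) = (μ₂ + μ₃)(μ₃ - μ₂)³/12` and `L(μ₃) = μ₃³ (2μ₂ - μ₃)/12`.
The upper bound `γ < γ*` is exactly `9 μ₂ μ₃ > 2 (μ₂ + μ₃)²`, i.e. `μ₃ < 2 μ₂`, while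
`γ > γ̃₁ > 0` because `f` is positive at `ρ̂ ∈ (β, 1)`.
-/

/-- The antiderivative of `u (u - a) (u - b)` vanishing at `0`. -/
noncomputable def cubicPotential (a b μ : ℝ) : ℝ :=
  μ ^ 4 / 4 - (a + b) * μ ^ 3 / 3 + a * b * μ ^ 2 / 2

lemma cubicPotential_zero (a b : ℝ) : cubicPotential a b 0 = 0 := by
  simp [cubicPotential]

lemma cubicPotential_right (a b : ℝ) : cubicPotential a b b = b ^ 3 * (2 * a - b) / 12 := by
  unfold cubicPotential; ring

lemma cubicPotential_left_sub_right (a b : ℝ) :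
    cubicPotential a b a - cubicPotential a b b = (a + b) * (b - a) ^ 3 / 12 := by
  unfold cubicPotential; ring

lemma cubicPotential_left_gt_right {a b : ℝ} (ha : 0 < a) (hab : a < b) :
    cubicPotential a b b < cubicPotential a b a := by
  have : 0 < (a + b) * (b - a) ^ 3 / 12 := by
    have : 0 < b - a := sub_pos.mpr hab
    have : 0 < a + b := by linarith
    positivity
  linarith [cubicPotential_left_sub_right a b]

lemma cubicPotential_right_pos {a b : ℝ} (hb : 0 < b) (hba : b < 2 * a) :
    0 < cubicPotential a b b := by
  rw [cubicPotential_right]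
  have : 0 < 2 * a - b := by linarith
  positivity

lemma vieta_of_quadratic_roots {β c a b : ℝ} (hab : a ≠ b)
    (ha : (a - β) * (1 - a) = c) (hb : (b - β) * (1 - b) = c) :
    a + b = 1 + β ∧ a * b - β = c := by
  have hsum : a + b = 1 + β := by
    have : (a - b) * (a + b - (1 + β)) = 0 := by linear_combination hb - ha
    rcases mul_eq_zero.mp this with h | h
    · exact absurd (sub_eq_zero.mp h) hab
    · linarith
  exact ⟨hsum, by linear_combination ha + a * hsum⟩

lemma bistable_potential_eq_cubicPotential {β c a b : ℝ} (hsum : a + b = 1 + β)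
    (hprod : a * b - β = c) (μ : ℝ) :
    μ ^ 2 * c / 2 + (μ ^ 4 / 4 - (1 + β) * μ ^ 3 / 3 + β * μ ^ 2 / 2) =
      cubicPotential a b μ := by
  rw [cubicPotential, ← hprod, hsum]; ring

lemma lt_two_mul_of_two_mul_sq_add_lt {a b : ℝ} (ha : 0 < a) (hab : a < b)
    (h : 2 * (a + b) ^ 2 < 9 * (a * b)) : b < 2 * a := by
  nlinarith

/-- The local maximum `ρ̂` of `u (u - β)(1 - u)` lies in `(β, 1)`. -/
lemma bistable_localMax_mem_Ioo {β : ℝ} (hβ₀ : 0 < β) (hβ₁ : β < 1) :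
    (1 + β + Real.sqrt (β ^ 2 - β + 1)) / 3 ∈ Set.Ioo β 1 := by
  have hS : Real.sqrt (β ^ 2 - β + 1) ^ 2 = β ^ 2 - β + 1 := Real.sq_sqrt (by nlinarith)
  have := Real.sqrt_nonneg (β ^ 2 - β + 1)
  constructor <;> nlinarith

lemma sub_mul_one_sub_eq_inv_of_root {β γ u : ℝ} (hu : u ≠ 0) (h : u * (u - β) * (1 - u) = u / γ) :
    (u - β) * (1 - u) = γ⁻¹ := by
  apply mul_left_cancel₀ hu
  rw [← mul_assoc, h, div_eq_mul_inv]

theorem stmt_3 (β γ γ₁ μ₂ μ₃ : ℝ) (f F L : ℝ → ℝ)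
    (hβ : 0 < β ∧ β < 1/2)
    (hf : ∀ u, f u = u * (u - β) * (1 - u))
    (hF : ∀ u, F u = u^4 / 4 - (1 + β) * u^3 / 3 + β * u^2 / 2)
    (hL : ∀ μ, L μ = μ^2 / (2 * γ) + F μ)
    (hγ₁ : f ((1 + β + Real.sqrt (β^2 - β + 1)) / 3)
         = ((1 + β + Real.sqrt (β^2 - β + 1)) / 3) / γ₁)
    (hγ : γ₁ < γ ∧ γ < 9 / ((1 - 2*β) * (2 - β)))
    (hroots : {u : ℝ | f u = u / γ} = {0, μ₂, μ₃})
    (hord : 0 < μ₂ ∧ μ₂ < μ₃) :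
    L μ₂ > L μ₃ ∧ L μ₃ > L 0 := by
  obtain ⟨hβ₀, hβ₁⟩ := hβ
  obtain ⟨hρβ, hρ1⟩ := bistable_localMax_mem_Ioo hβ₀ (by linarith)
  have hγ₁_pos : 0 < γ₁ := by
    have : 0 < f ((1 + β + Real.sqrt (β ^ 2 - β + 1)) / 3) := by
      rw [hf]; exact mul_pos (mul_pos (by linarith) (by linarith)) (by linarith)
    rw [hγ₁] at this
    exact (div_pos_iff_of_pos_left (by linarith)).mp this
  have hγ_pos : 0 < γ := hγ₁_pos.trans hγ.1
  have hroot : ∀ u ∈ ({0, μ₂, μ₃} : Set ℝ), u ≠ 0 → (u - β) * (1 - u) = γ⁻¹ := by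
    intro u hu hu₀
    rw [← hroots] at hu
    exact sub_mul_one_sub_eq_inv_of_root hu₀ (by rw [← hf]; exact hu)
  obtain ⟨hsum, hprod⟩ := vieta_of_quadratic_roots hord.2.ne
    (hroot μ₂ (by simp) hord.1.ne') (hroot μ₃ (by simp) (hord.1.trans hord.2).ne')
  have hL_eq : ∀ μ, L μ = cubicPotential μ₂ μ₃ μ := fun μ ↦ by
    rw [hL, hF, ← bistable_potential_eq_cubicPotential hsum hprod]; ring
  have hγ_star : (1 - 2 * β) * (2 - β) < 9 * γ⁻¹ := by
    rw [← div_eq_mul_inv, lt_div_iff₀ hγ_pos, mul_comm, ← lt_div_iff₀ (by nlinarith)]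
    exact hγ.2
  have hμ₃ : μ₃ < 2 * μ₂ := lt_two_mul_of_two_mul_sq_add_lt hord.1 hord.2 (by
    rw [hsum]; nlinarith)
  rw [hL_eq, hL_eq, hL_eq, cubicPotential_zero]
  exact ⟨cubicPotential_left_gt_right hord.1 hord.2,
    cubicPotential_right_pos (hord.1.trans hord.2) hμ₃⟩
end

section
/- If w ∈ H¹ₑₓ(ℝ), i.e. ∫ℝ eˣ(w² + w'²) dx < ∞, then (1/4)∫ℝ eˣ w² dx ≤ ∫ℝ eˣ w'² dx. -/
/-!
Since `eˣ w²` and its derivative `eˣ (w² + 2 w w')` are integrable, the integral of the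
derivative vanishes: `∫ eˣ w² + 2 ∫ eˣ w w' = 0`. Bounding the cross term pointwise by
`w w' ≥ -(w²/4 + w'²)` gives `∫ eˣ w² ≤ (1/2) ∫ eˣ w² + 2 ∫ eˣ w'²`.
-/

open MeasureTheory Real

section WeightedSquares

variable {α : Type*} [MeasurableSpace α] {μ : Measure α} {ρ u v : α → ℝ}

theorem MeasureTheory.Integrable.weighted_sq_left (hρ : ∀ x, 0 ≤ ρ x)
    (hρm : AEStronglyMeasurable ρ μ) (hu : AEStronglyMeasurable u μ)
    (h : Integrable (fun x => ρ x * (u x ^ 2 + v x ^ 2)) μ) :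
    Integrable (fun x => ρ x * u x ^ 2) μ := by
  refine h.mono' (hρm.mul (hu.pow 2)) (Filter.Eventually.of_forall fun x => ?_)
  rw [norm_of_nonneg (mul_nonneg (hρ x) (sq_nonneg _))]
  exact mul_le_mul_of_nonneg_left (le_add_of_nonneg_right (sq_nonneg _)) (hρ x)

theorem MeasureTheory.Integrable.weighted_sq_right (hρ : ∀ x, 0 ≤ ρ x)
    (hρm : AEStronglyMeasurable ρ μ) (hv : AEStronglyMeasurable v μ)
    (h : Integrable (fun x => ρ x * (u x ^ 2 + v x ^ 2)) μ) :
    Integrable (fun x => ρ x * v x ^ 2) μ :=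
  Integrable.weighted_sq_left (v := u) hρ hρm hv (by simpa only [add_comm] using h)

theorem MeasureTheory.Integrable.weighted_mul (hρ : ∀ x, 0 ≤ ρ x)
    (hρm : AEStronglyMeasurable ρ μ) (hu : AEStronglyMeasurable u μ)
    (hv : AEStronglyMeasurable v μ) (h : Integrable (fun x => ρ x * (u x ^ 2 + v x ^ 2)) μ) :
    Integrable (fun x => ρ x * (u x * v x)) μ := by
  refine h.mono' (hρm.mul (hu.mul hv)) (Filter.Eventually.of_forall fun x => ?_)
  rw [norm_eq_abs, abs_mul, abs_of_nonneg (hρ x)]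
  refine mul_le_mul_of_nonneg_left (abs_le.mpr ⟨?_, ?_⟩) (hρ x)
  · nlinarith [sq_nonneg (u x + v x)]
  · nlinarith [sq_nonneg (u x - v x)]

end WeightedSquares

theorem neg_quarter_sq_add_sq_le_mul (a b : ℝ) : -(1 / 4 * a ^ 2 + b ^ 2) ≤ a * b := by
  nlinarith [sq_nonneg (a / 2 + b)]

theorem hasDerivAt_exp_mul_sq {w : ℝ → ℝ} {w' : ℝ} {x : ℝ} (hw : HasDerivAt w w' x) :
    HasDerivAt (fun x => exp x * w x ^ 2) (exp x * w x ^ 2 + 2 * (exp x * (w x * w'))) x := by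
  refine ((hasDerivAt_exp x).fun_mul (hw.fun_pow 2)).congr_deriv ?_
  norm_num
  ring

theorem integral_exp_mul_sq_add_two_mul_integral_exp_mul_deriv_eq_zero {w : ℝ → ℝ}
    (hw : Differentiable ℝ w) (hsq : Integrable (fun x => exp x * w x ^ 2))
    (hcross : Integrable (fun x => exp x * (w x * deriv w x))) :
    (∫ x, exp x * w x ^ 2) + 2 * ∫ x, exp x * (w x * deriv w x) = 0 := by
  rw [← integral_const_mul]
  exact (integral_add hsq (hcross.const_mul 2)).symm.trans <|
    integral_eq_zero_of_hasDerivAt_of_integrable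
    (fun x => hasDerivAt_exp_mul_sq (hw x).hasDerivAt) (hsq.add (hcross.const_mul 2)) hsq

theorem stmt_4 (w : ℝ → ℝ)
    (hw : Differentiable ℝ w)
    (hH1 : Integrable (fun x => Real.exp x * ((w x)^2 + (deriv w x)^2))) :
    (1/4) * ∫ x, Real.exp x * (w x)^2 ≤ ∫ x, Real.exp x * (deriv w x)^2 := by
  have hexp : AEStronglyMeasurable exp volume := continuous_exp.aestronglyMeasurable
  have hwm : AEStronglyMeasurable w volume := hw.continuous.aestronglyMeasurable
  have hw'm : AEStronglyMeasurable (deriv w) volume := (measurable_deriv w).aestronglyMeasurable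
  have hpos : ∀ x, 0 ≤ exp x := fun x => (exp_pos x).le
  have hsq := hH1.weighted_sq_left hpos hexp hwm
  have hsq' := hH1.weighted_sq_right hpos hexp hw'm
  have hcross := hH1.weighted_mul hpos hexp hwm hw'm
  have hzero := integral_exp_mul_sq_add_two_mul_integral_exp_mul_deriv_eq_zero hw hsq hcross
  have hbound : ∫ x, -(1 / 4 * (exp x * w x ^ 2) + exp x * deriv w x ^ 2) ≤
      ∫ x, exp x * (w x * deriv w x) := by
    refine integral_mono ((hsq.const_mul _).add hsq').neg hcross fun x => ?_
    have hpt := mul_le_mul_of_nonneg_left (neg_quarter_sq_add_sq_le_mul (w x) (deriv w x)) (hpos x)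
    dsimp only
    linarith
  rw [integral_neg, integral_add (hsq.const_mul _) hsq', integral_const_mul] at hbound
  linarith
end

section
/- For w ∈ H¹ₑₓ(ℝ), ∫ℝ eˣ w'² dx ≤ ‖w‖²_{H¹ₑₓ} ≤ 5 ∫ℝ eˣ w'² dx, where ‖w‖²_{H¹ₑₓ} = ∫ℝ eˣ w'² dx + ∫ℝ eˣ w² dx; hence ‖w'‖_{L²ₑₓ} is an equivalent norm on H¹ₑₓ. -/
open MeasureTheory Real

/-!
Since `(eˣ w²)' = eˣ (w² + 2 w w')` is integrable together with `eˣ w²`, its integral vanishes.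
Expanding `0 ≤ ∫ eˣ (w + 2 w')²` with this identity gives `∫ eˣ w² ≤ 4 ∫ eˣ w'²`.
-/

lemma integrable_weight_mul_mul_of_integrable_sq {α : Type*} [MeasurableSpace α] {μ : Measure α}
    {ρ f g : α → ℝ} (hρ : ∀ x, 0 ≤ ρ x)
    (hm : AEStronglyMeasurable (fun x => ρ x * (f x * g x)) μ)
    (hf : Integrable (fun x => ρ x * f x ^ 2) μ) (hg : Integrable (fun x => ρ x * g x ^ 2) μ) :
    Integrable (fun x => ρ x * (f x * g x)) μ := by
  refine (hf.add hg).mono' hm (ae_of_all _ fun x => ?_)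
  have hρx := hρ x
  rw [Pi.add_apply, Real.norm_eq_abs, abs_mul, abs_of_nonneg hρx, ← mul_add]
  gcongr
  rw [abs_le]
  constructor <;> nlinarith [sq_nonneg (f x + g x), sq_nonneg (f x - g x)]

section

variable {w : ℝ → ℝ}

lemma integrable_exp_mul_sq_and_deriv_sq (hw : Differentiable ℝ w)
    (hH1 : Integrable (fun x => exp x * (w x ^ 2 + deriv w x ^ 2))) :
    Integrable (fun x => exp x * w x ^ 2) ∧ Integrable (fun x => exp x * deriv w x ^ 2) := by
  simp only [mul_add] at hH1
  refine (integrable_add_iff_of_nonneg ?_ ?_ ?_).mp hH1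
  · exact (continuous_exp.mul (hw.continuous.pow 2)).aestronglyMeasurable
  all_goals exact ae_of_all _ fun x => by positivity

lemma integrable_exp_mul_sq_add_two_mul_deriv (hw : Differentiable ℝ w)
    (hsq : Integrable (fun x => exp x * w x ^ 2))
    (hderiv_sq : Integrable (fun x => exp x * deriv w x ^ 2)) :
    Integrable (fun x => exp x * (w x ^ 2 + 2 * (w x * deriv w x))) := by
  have hprod : Integrable (fun x => exp x * (w x * deriv w x)) :=
    integrable_weight_mul_mul_of_integrable_sq (fun x => (exp_pos x).le)
      (continuous_exp.measurable.mul (hw.continuous.measurable.mul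
        (measurable_deriv w))).aestronglyMeasurable hsq hderiv_sq
  refine (hsq.add (hprod.const_mul 2)).congr (ae_of_all _ fun x => ?_)
  simp only [Pi.add_apply]
  ring

lemma integral_exp_mul_sq_add_two_mul_deriv_eq_zero (hw : Differentiable ℝ w)
    (hsq : Integrable (fun x => exp x * w x ^ 2))
    (hderiv_sq : Integrable (fun x => exp x * deriv w x ^ 2)) :
    ∫ x, exp x * (w x ^ 2 + 2 * (w x * deriv w x)) = 0 := by
  have hderiv : ∀ x, HasDerivAt (fun x => exp x * w x ^ 2)
      (exp x * (w x ^ 2 + 2 * (w x * deriv w x))) x := fun x => by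
    refine ((hasDerivAt_exp x).fun_mul ((hw x).hasDerivAt.fun_pow 2)).congr_deriv ?_
    push_cast
    ring
  exact integral_eq_zero_of_hasDerivAt_of_integrable hderiv
    (integrable_exp_mul_sq_add_two_mul_deriv hw hsq hderiv_sq) hsq

theorem integral_exp_mul_sq_le_four_mul_integral_exp_mul_deriv_sq (hw : Differentiable ℝ w)
    (hsq : Integrable (fun x => exp x * w x ^ 2))
    (hderiv_sq : Integrable (fun x => exp x * deriv w x ^ 2)) :
    ∫ x, exp x * w x ^ 2 ≤ 4 * ∫ x, exp x * deriv w x ^ 2 := by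
  have hzero := integral_exp_mul_sq_add_two_mul_deriv_eq_zero hw hsq hderiv_sq
  have hcross := integrable_exp_mul_sq_add_two_mul_deriv hw hsq hderiv_sq
  have hexpand : (fun x => exp x * (w x + 2 * deriv w x) ^ 2) = fun x =>
      2 * (exp x * (w x ^ 2 + 2 * (w x * deriv w x))) - exp x * w x ^ 2
        + 4 * (exp x * deriv w x ^ 2) := by
    funext x
    ring
  have hnonneg : 0 ≤ ∫ x, exp x * (w x + 2 * deriv w x) ^ 2 :=
    integral_nonneg fun x => by positivity
  rw [hexpand, integral_add, integral_sub, integral_const_mul, integral_const_mul, hzero]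
    at hnonneg
  · linarith
  · exact hcross.const_mul 2
  · exact hsq
  · exact (hcross.const_mul 2).sub hsq
  · exact hderiv_sq.const_mul 4

end

theorem stmt_6 (w : ℝ → ℝ)
    (hw : Differentiable ℝ w)
    (hH1 : Integrable (fun x => Real.exp x * ((w x)^2 + (deriv w x)^2))) :
    (∫ x, Real.exp x * (deriv w x)^2)
      ≤ (∫ x, Real.exp x * (deriv w x)^2) + ∫ x, Real.exp x * (w x)^2 ∧
    (∫ x, Real.exp x * (deriv w x)^2) + (∫ x, Real.exp x * (w x)^2)
      ≤ 5 * ∫ x, Real.exp x * (deriv w x)^2 := by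
  obtain ⟨hsq, hderiv_sq⟩ := integrable_exp_mul_sq_and_deriv_sq hw hH1
  have hpos : 0 ≤ ∫ x, exp x * w x ^ 2 := integral_nonneg fun x => by positivity
  have hbound := integral_exp_mul_sq_le_four_mul_integral_exp_mul_deriv_sq hw hsq hderiv_sq
  constructor <;> linarith
end
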